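/- arXiv:1302.6180 — 3 statements merged into one kernel-verified Lean document; each statement's English description precedes it below -/
import Mathlib

section
/- Let A be a commutative ring, m ≥ 1 an integer, and R = A[X_1,…,X_m] the polynomial ring. For a nonempty subset S ⊆ {1,…,m} let I_S ⊆ R be the ideal generated by {X_i : i ∈ S}. For 0 ≤ p ≤ m−1 set C^p := ⊕_{S ⊆ {1,…,m}, |S| = p+1} R/I_S, and let d^p : C^p → C^{p+1} be the map whose component from the summand indexed by S to the summand indexed by S ∪ {i} (for i ∉ S) is (−1)^{#{i' ∈ S : i' < i}} times the natural quotient map R/I_S → R/I_{S∪{i}}, all other components being zero. Then d^{p+1} ∘ d^p = 0, and the augmented complex 0 → R/(X_1⋯X_m) → C^0 → C^1 → ⋯ → C^{m−1} → 0 is exact, where the first map has as components the natural quotient maps R/(X_1⋯X_m) → R/(X_i) for 1 ≤ i ≤ m. -/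
/-!
Everything is graded by monomials. The class of `X^a` survives exactly in the summands `R/I_S`
with `S` disjoint from the support of `a`, so the `X^a`-strand of the augmented complex is the
augmented cochain complex of the full simplex on the variables not dividing `X^a` (and is zero if
there are none). Coning off from the least such variable `j` gives an `A`-linear contracting
homotopy, `h [X^a]_T = [X^a]_{T \ {j}}` if `j ∈ T` and `0` otherwise; the identity
`d h + h d = 1` is a purely combinatorial fact about alternating sums over finite sets.
-/

open DirectSum

variable (A : Type*) [CommRing A] (m : ℕ)

/-- The polynomial ring `R = A[X_1, …, X_m]`. -/
abbrev polyR := MvPolynomial (Fin m) A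

/-- The ideal `I_S` generated by the variables `X_i`, `i ∈ S`. -/
noncomputable def idealOf (S : Finset (Fin m)) : Ideal (polyR A m) :=
  Ideal.span (MvPolynomial.X '' (S : Set (Fin m)))

/-- The term `C^p = ⊕_{|S| = p+1} R/I_S` of the Cech complex. -/
abbrev cechC (p : ℕ) :=
  ⨁ (S : {S : Finset (Fin m) // S.card = p + 1}), ((polyR A m) ⧸ idealOf A m S.val)

/-- The natural quotient map `R/I → R/J` for ideals `I ≤ J`. -/
noncomputable def quotMap (I J : Ideal (polyR A m)) (h : I ≤ J) :
    ((polyR A m) ⧸ I) →ₗ[polyR A m] ((polyR A m) ⧸ J) :=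
  Submodule.mapQ I J LinearMap.id (by rwa [Submodule.comap_id])

/-- The Cech differential `d^p : C^p → C^{p+1}`, whose component from the summand
indexed by `S` to the summand indexed by `S ∪ {i}` (for `i ∉ S`) is
`(-1) ^ #{i' ∈ S | i' < i}` times the natural quotient map, all other components
being zero. -/
noncomputable def cechD (p : ℕ) : cechC A m p →ₗ[polyR A m] cechC A m (p + 1) :=
  DirectSum.toModule (polyR A m) _ (cechC A m (p + 1)) (fun S =>
    ∑ i ∈ (S.valᶜ).attach,
      ((-1 : polyR A m) ^ (S.val.filter (fun i' => i' < i.val)).card) •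
        ((DirectSum.lof (polyR A m) {T : Finset (Fin m) // T.card = p + 1 + 1}
            (fun T => (polyR A m) ⧸ idealOf A m T.val)
            ⟨insert i.val S.val, by
              rw [Finset.card_insert_of_notMem (Finset.mem_compl.mp i.property), S.property]⟩) ∘ₗ
          quotMap A m _ _
            (Ideal.span_mono (Set.image_mono
              (Finset.coe_subset.mpr (Finset.subset_insert _ _))))))

/-- The augmentation `R/(X_1⋯X_m) → C^0 = ⊕_i R/(X_i)`, with components the
natural quotient maps. -/
noncomputable def cechAug :
    ((polyR A m) ⧸ Ideal.span {(∏ i : Fin m, MvPolynomial.X i : polyR A m)})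
      →ₗ[polyR A m] cechC A m 0 :=
  ∑ i : Fin m,
    (DirectSum.lof (polyR A m) {T : Finset (Fin m) // T.card = 0 + 1}
        (fun T => (polyR A m) ⧸ idealOf A m T.val)
        ⟨({i} : Finset (Fin m)), Finset.card_singleton i⟩) ∘ₗ
      quotMap A m _ _ (by
        rw [Ideal.span_le]
        intro x hx
        simp only [Set.mem_singleton_iff] at hx
        subst hx
        obtain ⟨c, hc⟩ := Finset.dvd_prod_of_mem (fun j => (MvPolynomial.X j : polyR A m)) (Finset.mem_univ i)
        rw [hc]
        exact Ideal.mul_mem_right c _ (Ideal.subset_span (by simp)))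

open MvPolynomial Finset

section FinsetCochain

variable {ι M : Type*} [LinearOrder ι] [AddCommGroup M]

def coneContraction (j : ι) (e : Finset ι → M) (T : Finset ι) : M :=
  if j ∈ T then e (T.erase j) else 0

theorem map_coneContraction {N F : Type*} [AddCommGroup N] [FunLike F M N]
    [AddMonoidHomClass F M N] (φ : F) (j : ι) (e : Finset ι → M) (T : Finset ι) :
    φ (coneContraction j e T) = coneContraction j (fun S => φ (e S)) T := by
  unfold coneContraction
  split_ifs <;> simp

theorem card_filter_lt_insert {T : Finset ι} {i : ι} (hi : i ∉ T) (k : ι) :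
    #{x ∈ insert i T | x < k} = #{x ∈ T | x < k} + if i < k then 1 else 0 := by
  rw [filter_insert]
  split_ifs with h
  · rw [card_insert_of_notMem (fun hmem => hi (mem_of_mem_filter _ hmem))]
  · rfl

variable [Fintype ι]

def finsetCoboundary (e : Finset ι → M) (T : Finset ι) : M :=
  ∑ i ∈ Tᶜ, (-1 : ℤ) ^ #{x ∈ T | x < i} • e (insert i T)

theorem map_finsetCoboundary {N F : Type*} [AddCommGroup N] [FunLike F M N]
    [AddMonoidHomClass F M N] (φ : F) (e : Finset ι → M) (T : Finset ι) :
    φ (finsetCoboundary e T) = finsetCoboundary (fun S => φ (e S)) T := by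
  simp [finsetCoboundary, map_sum, map_zsmul]

theorem finsetCoboundary_finsetCoboundary (e : Finset ι → M) :
    finsetCoboundary (finsetCoboundary e) = 0 := by
  funext T
  simp only [finsetCoboundary, smul_sum, smul_smul, Pi.zero_apply]
  rw [sum_sigma']
  -- adding `i` then `k` and adding `k` then `i` reach the same set with opposite signs
  refine sum_involution (fun p _ => ⟨p.2, p.1⟩) ?_ ?_ ?_ (fun _ _ => rfl)
  · rintro ⟨i, k⟩ hp
    simp only [mem_sigma, mem_compl, mem_insert, not_or] at hp
    obtain ⟨hi, hki, hk⟩ := hp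
    rw [insert_comm, ← add_smul, card_filter_lt_insert hi, card_filter_lt_insert hk]
    convert zero_smul ℤ (e (insert i (insert k T))) using 2
    rcases lt_or_gt_of_ne hki with h | h <;> simp [h, h.not_gt, pow_succ] <;> ring
  · rintro ⟨i, k⟩ hp - h
    simp only [mem_sigma, mem_compl, mem_insert, not_or] at hp
    exact hp.2.1 (congrArg Sigma.fst h)
  · rintro ⟨i, k⟩ hp
    simp only [mem_sigma, mem_compl, mem_insert, not_or] at hp ⊢
    exact ⟨hp.2.2, fun h => hp.2.1 h.symm, hp.1⟩

theorem finsetCoboundary_coneContraction_add (j : ι) (e : Finset ι → M)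
    (he : ∀ S, ∀ x ∈ S, x < j → e S = 0) (T : Finset ι) :
    finsetCoboundary (coneContraction j e) T + coneContraction j (finsetCoboundary e) T = e T := by
  have sign_smul : ∀ S, (-1 : ℤ) ^ #{x ∈ S | x < j} • e S = e S := by
    intro S
    by_cases h : ∃ x ∈ S, x < j
    · obtain ⟨x, hxS, hxj⟩ := h
      rw [he S x hxS hxj, smul_zero]
    · push Not at h
      rw [card_eq_zero.2 (filter_eq_empty_iff.2 fun x hx => (h x hx).not_gt), pow_zero, one_smul]
  unfold finsetCoboundary coneContraction
  beta_reduce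
  by_cases hjT : j ∈ T
  -- re-adding `j` gives `e T`; the other cofaces of `T \ {j}` cancel against the cone over the
  -- cofaces of `T`, or vanish because they add a vertex below `j`
  · rw [if_pos hjT, compl_erase, sum_insert (by simpa using hjT), insert_erase hjT, filter_erase,
      erase_eq_of_notMem (by simp), sign_smul, add_left_comm, ← sum_add_distrib, add_eq_left]
    refine sum_eq_zero fun i hi => ?_
    have hiT : i ∉ T := mem_compl.1 hi
    have hij : i ≠ j := fun h => hiT (h ▸ hjT)
    rw [if_pos (mem_insert_of_mem hjT), erase_insert_of_ne hij]
    rcases lt_or_gt_of_ne hij with hlt | hgt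
    · rw [he _ i (mem_insert_self i _) hlt, smul_zero, smul_zero, add_zero]
    · have hcard : #{x ∈ T | x < i} = #{x ∈ T.erase j | x < i} + 1 := by
        simpa [hgt, insert_erase hjT] using card_filter_lt_insert (notMem_erase j T) i
      rw [hcard, pow_succ, mul_neg_one, neg_smul, neg_add_cancel]
  · rw [if_neg hjT, add_zero, sum_eq_single_of_mem j (mem_compl.2 hjT),
      if_pos (mem_insert_self j T), erase_insert hjT, sign_smul]
    intro i _ hij
    rw [if_neg (by simpa [hjT] using hij.symm), smul_zero]

def monomialContraction (a : ι →₀ ℕ) (e : Finset ι → M) (T : Finset ι) : M :=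
  if hU : a.supportᶜ.Nonempty then coneContraction (a.supportᶜ.min' hU) e T else 0

end FinsetCochain

theorem LinearMap.range_eq_ker_of_homotopy {R M N P : Type*} [Semiring R] [AddCommMonoid M]
    [AddCommMonoid N] [AddCommMonoid P] [Module R M] [Module R N] [Module R P]
    {f : M →ₗ[R] N} {g : N →ₗ[R] P} (hgf : g ∘ₗ f = 0) (h : N → M) (k : P →+ N)
    (hhk : ∀ x, f (h x) + k (g x) = x) : LinearMap.range f = LinearMap.ker g :=
  (LinearMap.exact_iff.mp (LinearMap.exact_of_comp_of_mem_range hgf fun x hx =>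
    ⟨h x, by simpa [hx] using hhk x⟩)).symm

theorem monomial_mem_span_prod_X {σ R : Type*} [Fintype σ] [CommSemiring R] {a : σ →₀ ℕ}
    (ha : a.support = univ) : monomial a (1 : R) ∈ Ideal.span {∏ i, X i} := by
  rw [Ideal.mem_span_singleton, monomial_eq, map_one, one_mul,
    Finsupp.prod_fintype _ _ fun i => pow_zero _]
  exact prod_dvd_prod_of_dvd _ _ fun i _ =>
    dvd_pow_self _ (Finsupp.mem_support_iff.1 (ha ▸ mem_univ i))

theorem quotient_linearMap_ext_monomial {σ R N : Type*} [CommRing R] [AddCommGroup N]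
    [Module R N] {I : Ideal (MvPolynomial σ R)} {F G : (MvPolynomial σ R ⧸ I) →ₗ[R] N}
    (h : ∀ a, F (Ideal.Quotient.mk I (monomial a 1)) = G (Ideal.Quotient.mk I (monomial a 1))) :
    F = G := by
  rw [← LinearMap.cancel_right (g := (Ideal.Quotient.mkₐ R I).toLinearMap)
    (Ideal.Quotient.mkₐ_surjective R I)]
  exact (basisMonomials σ R).ext fun a => by simpa using h a

theorem monomial_mem_idealOf {S : Finset (Fin m)} {a : Fin m →₀ ℕ} (c : A)
    (h : ¬Disjoint a.support S) : monomial a c ∈ idealOf A m S := by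
  obtain ⟨i, hia, hiS⟩ := not_disjoint_iff.1 h
  rw [idealOf, mem_ideal_span_X_image]
  intro b hb
  rw [mem_singleton.1 (support_monomial_subset hb)]
  exact ⟨i, hiS, Finsupp.mem_support_iff.1 hia⟩

noncomputable def cechSingle (q : ℕ) (T : Finset (Fin m)) (f : polyR A m) : cechC A m q :=
  if hT : #T = q + 1 then
    lof (polyR A m) {S : Finset (Fin m) // #S = q + 1}
      (fun S => polyR A m ⧸ idealOf A m S.val) ⟨T, hT⟩ (Ideal.Quotient.mk _ f)
  else 0

/-- The augmentation term `R/(X_1⋯X_m)` plays the role of the summand indexed by `∅`. -/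
noncomputable def cechAugSingle (T : Finset (Fin m)) (f : polyR A m) :
    polyR A m ⧸ Ideal.span {(∏ i : Fin m, X i : polyR A m)} :=
  if #T = 0 then Ideal.Quotient.mk _ f else 0

theorem cechAugSingle_empty (f : polyR A m) :
    cechAugSingle A m ∅ f = Ideal.Quotient.mk _ f :=
  if_pos card_empty

theorem cechSingle_monomial_ne_zero {q : ℕ} {T : Finset (Fin m)} {a : Fin m →₀ ℕ}
    (h : cechSingle A m q T (monomial a 1) ≠ 0) : #T = q + 1 ∧ Disjoint a.support T := by
  unfold cechSingle at h
  split_ifs at h with hT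
  · refine ⟨hT, by_contra fun hd => h ?_⟩
    rw [Ideal.Quotient.eq_zero_iff_mem.2 (monomial_mem_idealOf A m 1 hd), map_zero]
  · exact absurd rfl h

theorem cechAugSingle_monomial_ne_zero {T : Finset (Fin m)} {a : Fin m →₀ ℕ}
    (h : cechAugSingle A m T (monomial a 1) ≠ 0) : #T = 0 ∧ Disjoint a.support T := by
  unfold cechAugSingle at h
  split_ifs at h with hT
  · exact ⟨hT, card_eq_zero.1 hT ▸ disjoint_empty_right _⟩
  · exact absurd rfl h

theorem cechD_cechSingle (q : ℕ) (T : Finset (Fin m)) (f : polyR A m) :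
    cechD A m q (cechSingle A m q T f) = finsetCoboundary (cechSingle A m (q + 1) · f) T := by
  unfold finsetCoboundary
  beta_reduce
  by_cases hT : #T = q + 1
  · rw [cechSingle, dif_pos hT, cechD, toModule_lof, ← sum_attach Tᶜ]
    refine (LinearMap.sum_apply (M := polyR A m ⧸ idealOf A m T) _ _ _).trans
      (sum_congr rfl fun i _ => ?_)
    have hiT : #(insert i.val T) = q + 1 + 1 := by
      rw [card_insert_of_notMem (mem_compl.1 i.2), hT]
    refine (LinearMap.smul_apply (M := polyR A m ⧸ idealOf A m T) _ _ _).trans ?_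
    rw [cechSingle, dif_pos hiT, ← Int.cast_smul_eq_zsmul (polyR A m)]
    push_cast
    rfl
  · rw [cechSingle, dif_neg hT, map_zero]
    refine (sum_eq_zero fun i hi => ?_).symm
    rw [cechSingle, dif_neg (by rw [card_insert_of_notMem (mem_compl.1 hi)]; omega), smul_zero]

theorem cechAug_cechAugSingle (T : Finset (Fin m)) (f : polyR A m) :
    cechAug A m (cechAugSingle A m T f) = finsetCoboundary (cechSingle A m 0 · f) T := by
  unfold finsetCoboundary
  beta_reduce
  by_cases hT : #T = 0
  · rw [cechAugSingle, if_pos hT, card_eq_zero.1 hT, cechAug, LinearMap.sum_apply, compl_empty]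
    refine sum_congr rfl fun i _ => ?_
    rw [insert_empty, filter_empty, card_empty, pow_zero, one_smul, cechSingle,
      dif_pos (card_singleton i)]
    rfl
  · rw [cechAugSingle, if_neg hT, map_zero]
    refine (sum_eq_zero fun i hi => ?_).symm
    rw [cechSingle, dif_neg (by rw [card_insert_of_notMem (mem_compl.1 hi)]; omega), smul_zero]

theorem cechC_linearMap_ext {N : Type*} [AddCommGroup N] [Module A N] {q : ℕ}
    {F G : cechC A m q →ₗ[A] N}
    (h : ∀ T a, F (cechSingle A m q T (monomial a 1)) = G (cechSingle A m q T (monomial a 1))) :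
    F = G := by
  refine DirectSum.linearMap_ext A fun T => quotient_linearMap_ext_monomial fun a => ?_
  have key := h T.1 a
  rw [cechSingle, dif_pos T.2] at key
  exact key

theorem cechD_comp_cechD (p : ℕ) : (cechD A m (p + 1)).comp (cechD A m p) = 0 := by
  refine LinearMap.restrictScalars_injective A ?_
  refine cechC_linearMap_ext (N := cechC A m (p + 1 + 1)) A m fun T a => ?_
  simp [cechD_cechSingle, map_finsetCoboundary, finsetCoboundary_finsetCoboundary]

theorem cechD_comp_cechAug : (cechD A m 0).comp (cechAug A m) = 0 := by
  refine LinearMap.restrictScalars_injective A ?_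
  refine quotient_linearMap_ext_monomial (N := cechC A m (0 + 1)) fun a => ?_
  simp [← cechAugSingle_empty, cechAug_cechAugSingle, cechD_cechSingle, map_finsetCoboundary,
    finsetCoboundary_finsetCoboundary]

theorem restrictScalars_idealOf_le_ker {N : Type*} [AddCommGroup N] [Module A N]
    {S : Finset (Fin m)} {F : polyR A m →ₗ[A] N}
    (hF : ∀ a, ¬Disjoint a.support S → F (monomial a 1) = 0) :
    (idealOf A m S).restrictScalars A ≤ LinearMap.ker F := by
  intro f hf
  rw [Submodule.restrictScalars_mem, idealOf, mem_ideal_span_X_image] at hf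
  rw [LinearMap.mem_ker, f.as_sum, map_sum]
  refine sum_eq_zero fun a ha => ?_
  obtain ⟨i, hiS, hia⟩ := hf a ha
  rw [← mul_one (coeff a f), ← smul_eq_mul, ← smul_monomial, map_smul,
    hF a (not_disjoint_iff.2 ⟨i, Finsupp.mem_support_iff.2 hia, hiS⟩), smul_zero]

noncomputable def idealOfLift {N : Type*} [AddCommGroup N] [Module A N] (S : Finset (Fin m))
    (g : (Fin m →₀ ℕ) → N) : (polyR A m ⧸ idealOf A m S) →ₗ[A] N :=
  ((idealOf A m S).restrictScalars A).liftQ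
      ((basisMonomials (Fin m) A).constr A fun a => if Disjoint a.support S then g a else 0)
      (restrictScalars_idealOf_le_ker A m fun a ha =>
        ((basisMonomials (Fin m) A).constr_basis A _ a).trans (if_neg ha)) ∘ₗ
    (Submodule.Quotient.restrictScalarsEquiv A (idealOf A m S)).symm.toLinearMap

theorem idealOfLift_mk_monomial {N : Type*} [AddCommGroup N] [Module A N] (S : Finset (Fin m))
    (g : (Fin m →₀ ℕ) → N) (a : Fin m →₀ ℕ) :
    idealOfLift A m S g (Ideal.Quotient.mk _ (monomial a 1)) =
      if Disjoint a.support S then g a else 0 :=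
  (basisMonomials (Fin m) A).constr_basis A _ a

noncomputable def cechHomotopy {N : Type*} [AddCommGroup N] [Module A N] (q : ℕ)
    (e : Finset (Fin m) → polyR A m → N) : cechC A m q →ₗ[A] N :=
  toModule A _ N fun T =>
    idealOfLift A m T.1 fun a => monomialContraction a (e · (monomial a 1)) T.1

theorem cechHomotopy_cechSingle_monomial {N : Type*} [AddCommGroup N] [Module A N] (q : ℕ)
    (e : Finset (Fin m) → polyR A m → N) (a : Fin m →₀ ℕ)
    (he : ∀ S, e S (monomial a 1) ≠ 0 → #S = q ∧ Disjoint a.support S)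
    (T : Finset (Fin m)) :
    cechHomotopy A m q e (cechSingle A m q T (monomial a 1)) =
      monomialContraction a (e · (monomial a 1)) T := by
  have support : monomialContraction a (e · (monomial a 1)) T ≠ 0 →
      #T = q + 1 ∧ Disjoint a.support T := by
    intro h
    unfold monomialContraction coneContraction at h
    split_ifs at h with hU hjT
    · obtain ⟨hcard, hdisj⟩ := he _ h
      refine ⟨by rw [← card_erase_add_one hjT, hcard], ?_⟩
      rw [← insert_erase hjT, disjoint_insert_right]
      exact ⟨mem_compl.1 (min'_mem _ hU), hdisj⟩
    all_goals exact absurd rfl h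
  by_cases hT : #T = q + 1
  · rw [cechSingle, dif_pos hT]
    refine (toModule_lof A (⟨T, hT⟩ : {S : Finset (Fin m) // #S = q + 1}) _).trans ?_
    rw [idealOfLift_mk_monomial]
    split_ifs with hd
    · rfl
    · exact (not_imp_comm.1 support fun h => hd h.2).symm
  · rw [cechSingle, dif_neg hT, map_zero]
    exact (not_imp_comm.1 support fun h => hT h.1).symm

theorem map_cechHomotopy_add_cechHomotopy_cechD {N : Type*} [AddCommGroup N] [Module A N]
    (q : ℕ) (e : Finset (Fin m) → polyR A m → N)
    (he : ∀ a S, e S (monomial a 1) ≠ 0 → #S = q ∧ Disjoint a.support S)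
    (d : N →ₗ[A] cechC A m q)
    (hd : ∀ S f, d (e S f) = finsetCoboundary (cechSingle A m q · f) S)
    (x : cechC A m q) :
    d (cechHomotopy A m q e x) + cechHomotopy A m (q + 1) (cechSingle A m q) (cechD A m q x) =
      x := by
  suffices d ∘ₗ cechHomotopy A m q e + cechHomotopy A m (q + 1) (cechSingle A m q) ∘ₗ
      (cechD A m q).restrictScalars A = LinearMap.id from LinearMap.congr_fun this x
  refine cechC_linearMap_ext (N := cechC A m q) A m fun T a => ?_
  simp only [LinearMap.add_apply, LinearMap.comp_apply, LinearMap.restrictScalars_apply,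
    LinearMap.id_apply]
  by_cases hU : a.supportᶜ.Nonempty
  · have cone : ∀ S, ∀ x ∈ S, x < a.supportᶜ.min' hU →
        cechSingle A m q S (monomial a 1) = 0 := by
      intro S x hxS hx
      by_contra h
      exact (min'_le _ x (mem_compl.2
        (disjoint_right.1 (cechSingle_monomial_ne_zero A m h).2 hxS))).not_gt hx
    rw [cechHomotopy_cechSingle_monomial A m q e a (he a), cechD_cechSingle, map_finsetCoboundary]
    simp only [cechHomotopy_cechSingle_monomial A m (q + 1) (cechSingle A m q) a
      (fun S => cechSingle_monomial_ne_zero A m), monomialContraction, dif_pos hU,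
      map_coneContraction, hd]
    rw [add_comm]
    exact finsetCoboundary_coneContraction_add _ _ cone T
  · have hT : cechSingle A m q T (monomial a 1) = 0 := by
      by_contra h
      obtain ⟨hcard, hdisj⟩ := cechSingle_monomial_ne_zero A m h
      obtain ⟨i, hi⟩ := T.card_pos.1 (by omega)
      exact hU ⟨i, mem_compl.2 (disjoint_right.1 hdisj hi)⟩
    simp [hT]

theorem cechHomotopy_cechAug :
    Function.LeftInverse (cechHomotopy A m 0 (cechAugSingle A m)) (cechAug A m) := by
  intro x
  suffices cechHomotopy A m 0 (cechAugSingle A m) ∘ₗ (cechAug A m).restrictScalars A =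
      LinearMap.id from LinearMap.congr_fun this x
  refine quotient_linearMap_ext_monomial fun a => ?_
  simp only [LinearMap.comp_apply, LinearMap.restrictScalars_apply, LinearMap.id_apply]
  by_cases hU : a.supportᶜ.Nonempty
  · have cone : ∀ S, ∀ x ∈ S, x < a.supportᶜ.min' hU →
        cechAugSingle A m S (monomial a 1) = 0 :=
      fun S x hxS _ => by_contra fun h =>
        notMem_empty x (card_eq_zero.1 (cechAugSingle_monomial_ne_zero A m h).1 ▸ hxS)
    rw [← cechAugSingle_empty, cechAug_cechAugSingle, map_finsetCoboundary]
    simp only [cechHomotopy_cechSingle_monomial A m 0 (cechAugSingle A m) a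
      (fun S => cechAugSingle_monomial_ne_zero A m), monomialContraction, dif_pos hU]
    have key := finsetCoboundary_coneContraction_add _ _ cone ∅
    rwa [coneContraction, if_neg (notMem_empty _), add_zero] at key
  · have hfull : a.support = univ := (compl_eq_empty_iff _).1 (not_nonempty_iff_eq_empty.1 hU)
    rw [Ideal.Quotient.eq_zero_iff_mem.2 (monomial_mem_span_prod_X hfull), map_zero, map_zero]

theorem cech_resolution :
    (∀ p : ℕ, (cechD A m (p + 1)).comp (cechD A m p) = 0) ∧
    Function.Injective (cechAug A m) ∧
    LinearMap.range (cechAug A m) = LinearMap.ker (cechD A m 0) ∧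
    (∀ p : ℕ, LinearMap.range (cechD A m p) = LinearMap.ker (cechD A m (p + 1))) := by
  refine ⟨cechD_comp_cechD A m, (cechHomotopy_cechAug A m).injective, ?_, fun p => ?_⟩
  · exact LinearMap.range_eq_ker_of_homotopy (cechD_comp_cechAug A m) _
      (cechHomotopy A m 1 (cechSingle A m 0)).toAddMonoidHom
      (map_cechHomotopy_add_cechHomotopy_cechD A m 0 (cechAugSingle A m)
        (fun _ _ => cechAugSingle_monomial_ne_zero A m) ((cechAug A m).restrictScalars A)
        (cechAug_cechAugSingle A m))
  · exact LinearMap.range_eq_ker_of_homotopy (cechD_comp_cechD A m p) _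
      (cechHomotopy A m (p + 1 + 1) (cechSingle A m (p + 1))).toAddMonoidHom
      (map_cechHomotopy_add_cechHomotopy_cechD A m (p + 1) (cechSingle A m p)
        (fun _ _ => cechSingle_monomial_ne_zero A m) ((cechD A m p).restrictScalars A)
        (cechD_cechSingle A m p))
end

section
/- Let 𝒜 be an abelian category and n ≥ 0 an integer. Let A and B be objects of 𝒜 equipped with finite decreasing filtrations by subobjects A = W^0A ⊇ W^1A ⊇ ⋯ ⊇ W^nA ⊇ W^{n+1}A = 0 and B = W^0B ⊇ W^1B ⊇ ⋯ ⊇ W^nB ⊇ W^{n+1}B = 0; write Gr^qA := W^qA/W^{q+1}A and Gr^qB := W^qB/W^{q+1}B. Suppose given isomorphisms φ_q : Gr^qA ≅ Gr^qB for 0 ≤ q ≤ n such that: (i) Ext^1(Gr^qA, W^{q+2}A) = 0 for all 0 ≤ q ≤ n−1; (ii) Hom(Gr^qA, W^{q+1}A) = 0 for all 0 ≤ q ≤ n; (iii) for each 0 ≤ q ≤ n−1, the extension class in Ext^1(Gr^qA, Gr^{q+1}A) of the short exact sequence 0 → Gr^{q+1}A → W^qA/W^{q+2}A → Gr^qA →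 0 corresponds, under the isomorphisms φ_q and φ_{q+1}, to the extension class in Ext^1(Gr^qB, Gr^{q+1}B) of the short exact sequence 0 → Gr^{q+1}B → W^qB/W^{q+2}B → Gr^qB → 0. Then there exists a unique isomorphism f : A ≅ B such that f maps W^qA isomorphically onto W^qB for all q and induces φ_q on Gr^q for all q. -/
/-!
`F_q : W^q A ≅ W^q B` is built by descending induction on `q`. Given `F_{q+1}`, let `P` be the
pullback of `W^q B → W^q B / W^{q+2} B` along `W^q A → W^q A / W^{q+2} A ≅ W^q B / W^{q+2} B`;
by (iii), `(ι, ι ∘ F_{q+1})` embeds `W^{q+1} A` into `P`. A section of `P → W^q A` extending this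
embedding comes from a splitting of `0 → W^{q+2} → P / W^{q+1} A → Gr^q A → 0`, which exists by
(i); followed by `P → W^q B` it gives `F_q`, an isomorphism by the five lemma.
Two lifts differ on `W^q` by a map through `Gr^q A → W^{q+1} B`, which vanishes by (ii).
-/

open CategoryTheory CategoryTheory.Limits

universe v u

section

variable {𝒜 : Type u} [Category.{v} 𝒜] [Abelian 𝒜]

namespace CategoryTheory.ShortComplex

lemma shortExact_cokernel {X Y : 𝒜} (f : X ⟶ Y) [Mono f] :
    (ShortComplex.mk f (cokernel.π f) (cokernel.condition f)).ShortExact :=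
  .mk' (exact_cokernel f) inferInstance inferInstance

lemma ShortExact.pullback {S : ShortComplex 𝒜} (hS : S.ShortExact) {A : 𝒜} (c : A ⟶ S.X₃) :
    (ShortComplex.mk (pullback.lift 0 S.f (by rw [zero_comp, S.zero])) (pullback.fst c S.g)
      (pullback.lift_fst _ _ _)).ShortExact := by
  have := hS.mono_f
  have := hS.epi_g
  have h := pullback.lift_snd (f := c) (g := S.g) (0 : S.X₁ ⟶ A) S.f (by rw [zero_comp, S.zero])
  have : Mono (pullback.lift (f := c) (g := S.g) (0 : S.X₁ ⟶ A) S.f _) := mono_of_mono_fac h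
  refine .mk' (exact_of_f_is_kernel _ (KernelFork.IsLimit.ofι' _ _ fun k hk => ?_)) this
    inferInstance
  have hk' : (k ≫ pullback.snd c S.g) ≫ S.g = 0 := by
    rw [Category.assoc, ← pullback.condition, ← Category.assoc, hk, zero_comp]
  refine ⟨hS.exact.lift _ hk', pullback.hom_ext ?_ ?_⟩
  · rw [Category.assoc, pullback.lift_fst, comp_zero, hk]
  · rw [Category.assoc, h, hS.exact.lift_f]

lemma ShortExact.quotientByLift {S : ShortComplex 𝒜} (hS : S.ShortExact) {A : 𝒜} (j : A ⟶ S.X₂)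
    (i : A ⟶ S.X₃) [Mono i] (hj : j ≫ S.g = i) :
    (ShortComplex.mk (S.f ≫ cokernel.π j)
      (cokernel.desc j (S.g ≫ cokernel.π i) (by rw [← Category.assoc, hj, cokernel.condition]))
      (by simp)).ShortExact := by
  have := hS.mono_f
  have := hS.epi_g
  have : Mono j := mono_of_mono_fac hj
  have hmono : Mono (S.f ≫ cokernel.π j) := by
    refine Preadditive.mono_of_cancel_zero _ fun z hz => ?_
    have hz' : (z ≫ S.f) ≫ cokernel.π j = 0 := by rw [Category.assoc, hz]
    obtain ⟨w, hw⟩ : ∃ w, w ≫ j = z ≫ S.f := ⟨Abelian.monoLift j _ hz', Abelian.monoLift_comp _ _ _⟩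
    have hw0 : w = 0 := by
      rw [← cancel_mono i, ← hj, ← Category.assoc, hw, Category.assoc, S.zero, comp_zero, zero_comp]
    rw [← cancel_mono S.f, ← hw, hw0, zero_comp, zero_comp]
  have hepi : Epi (cokernel.desc j (S.g ≫ cokernel.π i)
      (by rw [← Category.assoc, hj, cokernel.condition])) :=
    epi_of_epi_fac (cokernel.π_desc _ _ _)
  refine .mk' (exact_of_g_is_cokernel _ (CokernelCofork.IsColimit.ofπ' _ _ fun k hk => ?_))
    hmono hepi
  have hk' : S.f ≫ cokernel.π j ≫ k = 0 := by simpa using hk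
  let m := hS.exact.desc _ hk'
  have hm : S.g ≫ m = cokernel.π j ≫ k := hS.exact.g_desc _ _
  have him : i ≫ m = 0 := by rw [← hj, Category.assoc, hm, cokernel.condition_assoc, zero_comp]
  refine ⟨cokernel.desc i m him, ?_⟩
  rw [← cancel_epi (cokernel.π j), cokernel.π_desc_assoc, Category.assoc, cokernel.π_desc, hm]

end CategoryTheory.ShortComplex

namespace CategoryTheory.Limits

lemma cokernel.map_eq_iff {X Y X' Y' : 𝒜} (f : X ⟶ Y) (f' : X' ⟶ Y') (p : X ⟶ X') (q : Y ⟶ Y')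
    (w : f ≫ q = p ≫ f') (g : cokernel f ⟶ cokernel f') :
    cokernel.map f f' p q w = g ↔ q ≫ cokernel.π f' = cokernel.π f ≫ g := by
  rw [← cancel_epi (cokernel.π f), cokernel.π_desc]

end CategoryTheory.Limits

def ExtensionsSplit (X Y : 𝒜) : Prop :=
  ∀ (E : 𝒜) (f : Y ⟶ E) (g : E ⟶ X) (hfg : f ≫ g = 0),
    (ShortComplex.mk f g hfg).ShortExact → ∃ σ : X ⟶ E, σ ≫ g = 𝟙 X

lemma ExtensionsSplit.exists_retraction {X Y E : 𝒜} (h : ExtensionsSplit X Y) {f : Y ⟶ E}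
    {g : E ⟶ X} {hfg : f ≫ g = 0} (hS : (ShortComplex.mk f g hfg).ShortExact) :
    ∃ ρ : E ⟶ Y, f ≫ ρ = 𝟙 Y :=
  have ⟨σ, hσ⟩ := h E f g hfg hS
  ⟨_, (ShortComplex.Splitting.ofExactOfSection _ hS.exact σ hσ hS.mono_f).f_r⟩

theorem exists_lift_of_extensionsSplit {A₁ A₀ : 𝒜} (i : A₁ ⟶ A₀) [Mono i] {T : ShortComplex 𝒜}
    (hT : T.ShortExact) (hsplit : ExtensionsSplit (cokernel i) T.X₁) (c : A₀ ⟶ T.X₃)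
    (l : A₁ ⟶ T.X₂) (hl : i ≫ c = l ≫ T.g) :
    ∃ F : A₀ ⟶ T.X₂, i ≫ F = l ∧ F ≫ T.g = c := by
  have hS := hT.pullback c
  have := hS.epi_g
  let j : A₁ ⟶ pullback c T.g := pullback.lift i l hl
  have hj : j ≫ pullback.fst c T.g = i := pullback.lift_fst _ _ _
  have hU := hS.quotientByLift j i hj
  obtain ⟨ρ, hρ⟩ := hsplit.exists_retraction hU
  -- `𝟙 - π ≫ ρ ≫ κ` kills `κ = ker (pullback.fst)`, so it descends to a section `s` of
  -- `pullback.fst`; as `j ≫ π = 0`, this section extends `j`.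
  let κ : T.X₁ ⟶ pullback c T.g :=
    pullback.lift (f := c) (g := T.g) 0 T.f (by rw [zero_comp, T.zero])
  have he : κ ≫ (𝟙 _ - cokernel.π j ≫ ρ ≫ κ) = 0 := by
    rw [Preadditive.comp_sub, Category.comp_id, ← Category.assoc, ← Category.assoc, hρ,
      Category.id_comp, sub_self]
  let s := hS.exact.desc _ he
  have hs : pullback.fst c T.g ≫ s = 𝟙 _ - cokernel.π j ≫ ρ ≫ κ := hS.exact.g_desc _ he
  have hsp : s ≫ pullback.fst c T.g = 𝟙 A₀ := by
    rw [← cancel_epi (pullback.fst c T.g), ← Category.assoc, hs, Preadditive.sub_comp,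
      Category.assoc, Category.assoc, pullback.lift_fst, comp_zero, comp_zero, sub_zero,
      Category.id_comp, Category.comp_id]
  have his : i ≫ s = j := by
    rw [← hj, Category.assoc, hs, Preadditive.comp_sub, cokernel.condition_assoc, zero_comp,
      sub_zero, Category.comp_id]
  refine ⟨s ≫ pullback.snd c T.g, ?_, ?_⟩
  · rw [← Category.assoc, his, pullback.lift_snd]
  · rw [Category.assoc, ← pullback.condition, ← Category.assoc, hsp, Category.id_comp]

lemma isIso_of_isIso_of_isIso_cokernel {A₁ A₀ B₁ B₀ : 𝒜} (i : A₁ ⟶ A₀) (j : B₁ ⟶ B₀) [Mono i]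
    [Mono j] (f₁ : A₁ ⟶ B₁) (f : A₀ ⟶ B₀) (g : cokernel i ⟶ cokernel j) [IsIso f₁] [IsIso g]
    (h₁ : f₁ ≫ j = i ≫ f) (h₂ : f ≫ cokernel.π j = cokernel.π i ≫ g) : IsIso f :=
  ShortComplex.isIso₂_of_shortExact_of_isIso₁₃
    (S₁ := .mk i (cokernel.π i) (cokernel.condition i))
    (S₂ := .mk j (cokernel.π j) (cokernel.condition j))
    { τ₁ := f₁, τ₂ := f, τ₃ := g, comm₁₂ := h₁, comm₂₃ := h₂ }
    (ShortComplex.shortExact_cokernel i) (ShortComplex.shortExact_cokernel j)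

theorem exists_iso_extending {A₂ A₁ A₀ B₂ B₁ B₀ : 𝒜}
    (i₂ : A₂ ⟶ A₁) (i₁ : A₁ ⟶ A₀) (j₂ : B₂ ⟶ B₁) (j₁ : B₁ ⟶ B₀)
    [Mono i₂] [Mono i₁] [Mono j₂] [Mono j₁]
    (φ₁ : cokernel i₂ ≅ cokernel j₂) (φ₀ : cokernel i₁ ≅ cokernel j₁)
    (F₂ : A₂ ≅ B₂) (F₁ : A₁ ≅ B₁)
    (hF₁ : F₁.hom ≫ cokernel.π j₂ = cokernel.π i₂ ≫ φ₁.hom)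
    (ψ : cokernel (i₂ ≫ i₁) ≅ cokernel (j₂ ≫ j₁))
    (hψ₁ : cokernel.map i₂ (i₂ ≫ i₁) (𝟙 _) i₁ (by simp) ≫ ψ.hom
      = φ₁.hom ≫ cokernel.map j₂ (j₂ ≫ j₁) (𝟙 _) j₁ (by simp))
    (hψ₀ : ψ.hom ≫ cokernel.map (j₂ ≫ j₁) j₁ j₂ (𝟙 _) (by simp)
      = cokernel.map (i₂ ≫ i₁) i₁ i₂ (𝟙 _) (by simp) ≫ φ₀.hom)
    (hsplit : ExtensionsSplit (cokernel i₁) A₂) :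
    ∃ F₀ : A₀ ≅ B₀, F₁.hom ≫ j₁ = i₁ ≫ F₀.hom ∧
      F₀.hom ≫ cokernel.π j₁ = cokernel.π i₁ ≫ φ₀.hom := by
  have hT : (ShortComplex.mk (F₂.hom ≫ j₂ ≫ j₁) (cokernel.π (j₂ ≫ j₁))
      (by simp)).ShortExact :=
    ShortComplex.shortExact_of_iso
      (ShortComplex.isoMk (S₁ := .mk _ _ (cokernel.condition (j₂ ≫ j₁))) F₂.symm (Iso.refl _)
        (Iso.refl _) (by simp) (by simp))
      (ShortComplex.shortExact_cokernel (j₂ ≫ j₁))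
  have hl : i₁ ≫ cokernel.π (i₂ ≫ i₁) ≫ ψ.hom = (F₁.hom ≫ j₁) ≫ cokernel.π (j₂ ≫ j₁) := by
    have h := cokernel.π i₂ ≫= hψ₁
    rw [← reassoc_of% hF₁] at h
    simpa using h
  obtain ⟨F₀, hF₀i, hF₀ψ⟩ := exists_lift_of_extensionsSplit i₁ hT hsplit _ _ hl
  have hF₀φ : F₀ ≫ cokernel.π j₁ = cokernel.π i₁ ≫ φ₀.hom := by
    have h := hF₀ψ =≫ cokernel.map (j₂ ≫ j₁) j₁ j₂ (𝟙 _) (by simp)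
    rw [Category.assoc (cokernel.π _), hψ₀] at h
    simpa using h
  have := isIso_of_isIso_of_isIso_cokernel i₁ j₁ F₁.hom F₀ φ₀.hom hF₀i.symm hF₀φ
  exact ⟨asIso F₀, hF₀i.symm, hF₀φ⟩

theorem exists_filtered_iso (n : ℕ) (WA WB : ℕ → 𝒜)
    (ιA : ∀ q, WA (q + 1) ⟶ WA q) (ιB : ∀ q, WB (q + 1) ⟶ WB q)
    [∀ q, Mono (ιA q)] [∀ q, Mono (ιB q)]
    (hA : ∀ q, n + 1 ≤ q → IsZero (WA q)) (hB : ∀ q, n + 1 ≤ q → IsZero (WB q))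
    (φ : ∀ q, cokernel (ιA q) ≅ cokernel (ιB q))
    (hExt : ∀ q, q + 1 ≤ n → ExtensionsSplit (cokernel (ιA q)) (WA (q + 2)))
    (hClass : ∀ q, q + 1 ≤ n →
      ∃ ψ : cokernel (ιA (q + 1) ≫ ιA q) ≅ cokernel (ιB (q + 1) ≫ ιB q),
        cokernel.map (ιA (q + 1)) (ιA (q + 1) ≫ ιA q) (𝟙 _) (ιA q) (by simp) ≫ ψ.hom
          = (φ (q + 1)).hom ≫
            cokernel.map (ιB (q + 1)) (ιB (q + 1) ≫ ιB q) (𝟙 _) (ιB q) (by simp) ∧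
        ψ.hom ≫ cokernel.map (ιB (q + 1) ≫ ιB q) (ιB q) (ιB (q + 1)) (𝟙 _) (by simp)
          = cokernel.map (ιA (q + 1) ≫ ιA q) (ιA q) (ιA (q + 1)) (𝟙 _) (by simp) ≫
            (φ q).hom) :
    ∃ F : ∀ q, WA q ≅ WB q, (∀ q, (F (q + 1)).hom ≫ ιB q = ιA q ≫ (F q).hom) ∧
      ∀ q, (F q).hom ≫ cokernel.π (ιB q) = cokernel.π (ιA q) ≫ (φ q).hom := by
  induction n generalizing WA WB with
  | zero =>
    have hιA : ιA 0 = 0 := (hA 1 le_rfl).eq_of_src _ _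
    have hιB : ιB 0 = 0 := (hB 1 le_rfl).eq_of_src _ _
    have : IsIso (cokernel.π (ιA 0)) := by rw [hιA]; infer_instance
    have : IsIso (cokernel.π (ιB 0)) := by rw [hιB]; infer_instance
    refine ⟨fun
      | 0 => asIso (cokernel.π (ιA 0)) ≪≫ φ 0 ≪≫ (asIso (cokernel.π (ιB 0))).symm
      | q + 1 => (hA (q + 1) (by omega)).iso (hB (q + 1) (by omega)), ?_, ?_⟩
    · exact fun q => (hA (q + 1) (by omega)).eq_of_src _ _
    · rintro (_ | q)
      · simp
      · exact (hA (q + 1) (by omega)).eq_of_src _ _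
  | succ n ih =>
    obtain ⟨F, hFι, hFπ⟩ := ih (fun q => WA (q + 1)) (fun q => WB (q + 1))
      (fun q => ιA (q + 1)) (fun q => ιB (q + 1)) (fun q _ => hA (q + 1) (by omega))
      (fun q _ => hB (q + 1) (by omega)) (fun q => φ (q + 1)) (fun q _ => hExt (q + 1) (by omega))
      (fun q _ => hClass (q + 1) (by omega))
    obtain ⟨ψ, hψ₁, hψ₀⟩ := hClass 0 (by omega)
    obtain ⟨F₀, hF₀ι, hF₀π⟩ := exists_iso_extending (ιA 1) (ιA 0) (ιB 1) (ιB 0) (φ 1) (φ 0)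
      (F 1) (F 0) (hFπ 0) ψ hψ₁ hψ₀ (hExt 0 (by omega))
    refine ⟨fun | 0 => F₀ | q + 1 => F q, ?_, ?_⟩
    · rintro (_ | q)
      exacts [hF₀ι, hFι q]
    · rintro (_ | q)
      exacts [hF₀π, hFπ q]

lemma eq_of_comp_eq_of_comp_cokernel_π_eq {A₁ A₀ B₁ B₀ : 𝒜} (i : A₁ ⟶ A₀) (j : B₁ ⟶ B₀) [Mono j]
    (hHom : ∀ h : cokernel i ⟶ B₁, h = 0) {f g : A₀ ⟶ B₀} (h₁ : i ≫ f = i ≫ g)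
    (h₂ : f ≫ cokernel.π j = g ≫ cokernel.π j) : f = g := by
  have hi : i ≫ (f - g) = 0 := by rw [Preadditive.comp_sub, h₁, sub_self]
  have hj : cokernel.desc i (f - g) hi ≫ cokernel.π j = 0 := by
    rw [← cancel_epi (cokernel.π i), cokernel.π_desc_assoc, Preadditive.sub_comp, h₂, sub_self,
      comp_zero]
  rw [← sub_eq_zero, ← cokernel.π_desc i (f - g) hi, ← Abelian.monoLift_comp j _ hj,
    hHom (Abelian.monoLift j _ hj), zero_comp, comp_zero]

theorem filtered_hom_eq (n : ℕ) (WA WB : ℕ → 𝒜)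
    (ιA : ∀ q, WA (q + 1) ⟶ WA q) (ιB : ∀ q, WB (q + 1) ⟶ WB q) [∀ q, Mono (ιB q)]
    (hA : ∀ q, n + 1 ≤ q → IsZero (WA q))
    (hHom : ∀ q, q ≤ n → ∀ h : cokernel (ιA q) ⟶ WB (q + 1), h = 0)
    (φ : ∀ q, cokernel (ιA q) ⟶ cokernel (ιB q)) {F G : ∀ q, WA q ⟶ WB q}
    (hFι : ∀ q, F (q + 1) ≫ ιB q = ιA q ≫ F q) (hGι : ∀ q, G (q + 1) ≫ ιB q = ιA q ≫ G q)
    (hFπ : ∀ q, F q ≫ cokernel.π (ιB q) = cokernel.π (ιA q) ≫ φ q)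
    (hGπ : ∀ q, G q ≫ cokernel.π (ιB q) = cokernel.π (ιA q) ≫ φ q) (q : ℕ) : F q = G q := by
  rcases le_or_gt q (n + 1) with hq | hq
  · refine Nat.decreasingInduction (motive := fun q _ => F q = G q) (fun q hq hsucc => ?_)
      ((hA _ le_rfl).eq_of_src _ _) hq
    exact eq_of_comp_eq_of_comp_cokernel_π_eq (ιA q) (ιB q) (hHom q (by omega))
      (by rw [← hFι, ← hGι, hsucc]) (by rw [hFπ, hGπ])
  · exact (hA q hq.le).eq_of_src _ _

end

theorem filtered_iso_existsUnique
    {𝒜 : Type u} [Category.{v} 𝒜] [Abelian 𝒜] (n : ℕ)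
    (WA WB : ℕ → 𝒜)
    (ιA : ∀ q, WA (q + 1) ⟶ WA q) (ιB : ∀ q, WB (q + 1) ⟶ WB q)
    [∀ q, Mono (ιA q)] [∀ q, Mono (ιB q)]
    (hA : ∀ q, n + 1 ≤ q → IsZero (WA q)) (hB : ∀ q, n + 1 ≤ q → IsZero (WB q))
    -- the given isomorphisms `φ_q : Gr^q A ≅ Gr^q B`
    (φ : ∀ q, cokernel (ιA q) ≅ cokernel (ιB q))
    -- (i) `Ext^1(Gr^q A, W^{q+2} A) = 0` for `0 ≤ q ≤ n - 1`:
    -- every short exact sequence `0 → W^{q+2} A → E → Gr^q A → 0` splits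
    (hExt : ∀ q, q + 1 ≤ n → ∀ (E : 𝒜) (f : WA (q + 2) ⟶ E)
      (g : E ⟶ cokernel (ιA q)) (hfg : f ≫ g = 0),
      (ShortComplex.mk f g hfg).ShortExact →
        ∃ σ : cokernel (ιA q) ⟶ E, σ ≫ g = 𝟙 (cokernel (ιA q)))
    -- (ii) `Hom(Gr^q A, W^{q+1} A) = 0` for `0 ≤ q ≤ n`
    (hHom : ∀ q, q ≤ n → ∀ f : cokernel (ιA q) ⟶ WA (q + 1), f = 0)
    -- (iii) for `0 ≤ q ≤ n - 1`, the extension classes of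
    -- `0 → Gr^{q+1} A → W^q A/W^{q+2} A → Gr^q A → 0` and
    -- `0 → Gr^{q+1} B → W^q B/W^{q+2} B → Gr^q B → 0` correspond under
    -- `φ_q` and `φ_{q+1}`: there is an isomorphism of the two extensions
    (hClass : ∀ q, q + 1 ≤ n →
      ∃ ψ : cokernel (ιA (q + 1) ≫ ιA q) ≅ cokernel (ιB (q + 1) ≫ ιB q),
        cokernel.map (ιA (q + 1)) (ιA (q + 1) ≫ ιA q) (𝟙 _) (ιA q) (by simp) ≫ ψ.hom
          = (φ (q + 1)).hom ≫
            cokernel.map (ιB (q + 1)) (ιB (q + 1) ≫ ιB q) (𝟙 _) (ιB q) (by simp) ∧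
        ψ.hom ≫ cokernel.map (ιB (q + 1) ≫ ιB q) (ιB q) (ιB (q + 1)) (𝟙 _) (by simp)
          = cokernel.map (ιA (q + 1) ≫ ιA q) (ιA q) (ιA (q + 1)) (𝟙 _) (by simp) ≫
            (φ q).hom) :
    -- conclusion: a unique isomorphism `f : A ≅ B` mapping `W^q A` isomorphically
    -- onto `W^q B` for all `q` and inducing `φ_q` on the graded pieces
    ∃! f : WA 0 ≅ WB 0,
      ∃ F : ∀ q, WA q ≅ WB q, F 0 = f ∧
        (∀ q, (F (q + 1)).hom ≫ ιB q = ιA q ≫ (F q).hom) ∧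
        (∀ q, ∀ (w : ιA q ≫ (F q).hom = (F (q + 1)).hom ≫ ιB q),
          cokernel.map (ιA q) (ιB q) (F (q + 1)).hom (F q).hom w = (φ q).hom) := by
  obtain ⟨F, hFι, hFπ⟩ := exists_filtered_iso n WA WB ιA ιB hA hB φ hExt hClass
  refine ⟨F 0, ⟨F, rfl, hFι, fun q _ => (cokernel.map_eq_iff _ _ _ _ _ _).2 (hFπ q)⟩, ?_⟩
  rintro _ ⟨G, rfl, hGι, hGφ⟩
  have hHomB : ∀ q, q ≤ n → ∀ h : cokernel (ιA q) ⟶ WB (q + 1), h = 0 := fun q hq h => by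
    simpa using hHom q hq (h ≫ (F (q + 1)).inv) =≫ (F (q + 1)).hom
  exact Iso.ext (filtered_hom_eq n WA WB ιA ιB hA hHomB (fun q => (φ q).hom) hGι hFι
    (fun q => (cokernel.map_eq_iff _ _ _ _ _ _).1 (hGφ q (hGι q).symm)) hFπ 0)
end

section
/- Let R be a ring and K a cochain complex of R-modules with filtrations F and G by subcomplexes such that (K; F, G) is bi-strict. Then for all i, p, q the natural map H^i(F_pK ∩ G_qK) → H^i((F_pK ∩ G_qK)/(F_{p−1}K ∩ G_qK + F_pK ∩ G_{q−1}K)) induced by the quotient map of complexes is surjective, and its kernel equals the sum of the images of H^i(F_{p−1}K ∩ G_qK) and H^i(F_pK ∩ G_{q−1}K) in H^i(F_pK ∩ G_qK). In other words, the functors H^i, Gr^F_p and Gr^G_q commute: Gr^F_p Gr^G_q H^i(K) ≅ H^i(Gr^F_p Gr^G_q K), where the filtrations on H^i(K) are defined by the (injective) images of H^i(F_pK), H^i(G_qK), H^i(F_pK ∩ G_qK). -/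
/-!
Take `p' ≤ p`, `q' ≤ q` and write `A = F_{p'} ∩ G_q`, `B = F_p ∩ G_{q'}`, so `A ∩ B = F_{p'} ∩ G_{q'}`.
If `a + b` is a cycle with `a ∈ A`, `b ∈ B`, then `d a = -d b` is a cycle of `A ∩ B` bounding in `K`;
injectivity of `H(A ∩ B) → H(K)` gives `d a = d w` with `w ∈ A ∩ B`, and `a + b = (a - w) + (b + w)`
is a sum of cycles of `A` and `B`. If moreover `y + z` is a boundary for cycles `y ∈ A`, `z ∈ B`, the
intersection property of bi-strictness yields a cycle `u ∈ A ∩ B` homologous to `y` in `K`, and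
injectivity for `A` and `B` shows that `y - u` and `z + u` bound in `A` and `B`. The first move
describes the kernel; both together lift a cycle of `(F_p ∩ G_q)/(A + B)` to a cycle of `F_p ∩ G_q`.
-/

/- A cochain complex is encoded by modules `Kc i` with differentials `d i : Kc i →ₗ[R] Kc (i + 1)`;
`d ∘ d = 0` is a separate hypothesis. Homological conditions are stated elementwise on cycles and
boundaries. -/

variable {R : Type*} [Ring R]
variable (Kc : ℤ → Type*) [∀ i, AddCommGroup (Kc i)] [∀ i, Module R (Kc i)]
  (d : ∀ i, Kc i →ₗ[R] Kc (i + 1))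

/-- `F` is a filtration of the complex `(Kc, d)` by subcomplexes: monotone in the
filtration index and stable under the differential. -/
def IsFiltrationBySubcomplexes (F : ℤ → ∀ i, Submodule R (Kc i)) : Prop :=
  (∀ i, Monotone (fun p => F p i)) ∧ (∀ p i, ∀ x ∈ F p i, d i x ∈ F p (i + 1))

/-- The filtered complex `(Kc, d, F)` is strict: `d (F_p K^i) = F_p K^{i+1} ∩ d (K^i)`
for all `i, p` (the nontrivial inclusion being `⊇`). -/
def StrictFiltered (F : ℤ → ∀ i, Submodule R (Kc i)) : Prop :=
  ∀ p i, ∀ y ∈ F p (i + 1), y ∈ LinearMap.range (d i) → ∃ x ∈ F p i, d i x = y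

/-- `(K; F, G)` is bi-strict: the natural maps `H^i(F_p K) → H^i(K)`,
`H^i(G_q K) → H^i(K)`, `H^i(F_p K ∩ G_q K) → H^i(K)` are injective, and inside
`H^i(K)` the intersection of the images of `H^i(F_p K)` and `H^i(G_q K)` equals
the image of `H^i(F_p K ∩ G_q K)` (stated elementwise on cycles; the inclusion
`⊇` of the last condition holds automatically). -/
def BiStrict (F G : ℤ → ∀ i, Submodule R (Kc i)) : Prop :=
  (∀ p i, ∀ x ∈ F p (i + 1), d (i + 1) x = 0 → x ∈ LinearMap.range (d i) →
    ∃ z ∈ F p i, d i z = x) ∧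
  (∀ q i, ∀ x ∈ G q (i + 1), d (i + 1) x = 0 → x ∈ LinearMap.range (d i) →
    ∃ z ∈ G q i, d i z = x) ∧
  (∀ p q i, ∀ x ∈ F p (i + 1) ⊓ G q (i + 1), d (i + 1) x = 0 →
    x ∈ LinearMap.range (d i) → ∃ z ∈ F p i ⊓ G q i, d i z = x) ∧
  (∀ p q i (x y : Kc (i + 1)), x ∈ F p (i + 1) → d (i + 1) x = 0 →
    y ∈ G q (i + 1) → d (i + 1) y = 0 → x - y ∈ LinearMap.range (d i) →
    ∃ u ∈ F p (i + 1) ⊓ G q (i + 1), d (i + 1) u = 0 ∧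
      x - u ∈ LinearMap.range (d i))

open Submodule

namespace BiStrict

variable {Kc d} {F G : ℤ → ∀ i, Submodule R (Kc i)} {p p' q q' i : ℤ}

theorem exists_cycles_add_eq (hbi : BiStrict Kc d F G)
    (hdd : ∀ i (x : Kc i), d (i + 1) (d i x) = 0)
    (hF : IsFiltrationBySubcomplexes Kc d F) (hG : IsFiltrationBySubcomplexes Kc d G)
    (hp : p' ≤ p) (hq : q' ≤ q) {a b : Kc (i + 1)}
    (ha : a ∈ F p' (i + 1) ⊓ G q (i + 1)) (hb : b ∈ F p (i + 1) ⊓ G q' (i + 1))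
    (hab : d (i + 1) (a + b) = 0) :
    ∃ y z : Kc (i + 1),
      (y ∈ F p' (i + 1) ⊓ G q (i + 1) ∧ d (i + 1) y = 0) ∧
      (z ∈ F p (i + 1) ⊓ G q' (i + 1) ∧ d (i + 1) z = 0) ∧ y + z = a + b := by
  rw [map_add] at hab
  have hda : d (i + 1) a = -d (i + 1) b := eq_neg_of_add_eq_zero_left hab
  have hda_mem : d (i + 1) a ∈ F p' (i + 1 + 1) ⊓ G q' (i + 1 + 1) :=
    ⟨hF.2 _ _ _ ha.1, hda ▸ neg_mem (hG.2 _ _ _ hb.2)⟩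
  obtain ⟨w, hw, hdw⟩ := hbi.2.2.1 p' q' (i + 1) _ hda_mem (hdd _ a) ⟨a, rfl⟩
  refine ⟨a - w, b + w, ⟨⟨sub_mem ha.1 hw.1, sub_mem ha.2 (hG.1 _ hq hw.2)⟩, ?_⟩,
    ⟨⟨add_mem hb.1 (hF.1 _ hp hw.1), add_mem hb.2 hw.2⟩, ?_⟩, by abel⟩
  · rw [map_sub, hdw, sub_self]
  · rw [map_add, hdw]
    exact (add_comm _ _).trans hab

theorem exists_boundaries_add_eq (hbi : BiStrict Kc d F G)
    (hF : IsFiltrationBySubcomplexes Kc d F) (hG : IsFiltrationBySubcomplexes Kc d G)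
    (hp : p' ≤ p) (hq : q' ≤ q) {y z : Kc (i + 1)}
    (hy : y ∈ F p' (i + 1) ⊓ G q (i + 1)) (hdy : d (i + 1) y = 0)
    (hz : z ∈ F p (i + 1) ⊓ G q' (i + 1)) (hdz : d (i + 1) z = 0)
    (hyz : y + z ∈ LinearMap.range (d i)) :
    ∃ α ∈ F p' i ⊓ G q i, ∃ β ∈ F p i ⊓ G q' i, d i α + d i β = y + z := by
  obtain ⟨u, hu, hdu, v, hv⟩ := hbi.2.2.2 p' q' i y (-z) hy.1 hdy (neg_mem hz.2)
    (by rw [map_neg, hdz, neg_zero]) (by rwa [sub_neg_eq_add])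
  obtain ⟨w, hw⟩ := hyz
  obtain ⟨α, hα, hdα⟩ := hbi.2.2.1 p' q i (y - u)
    ⟨sub_mem hy.1 hu.1, sub_mem hy.2 (hG.1 _ hq hu.2)⟩ (by rw [map_sub, hdy, hdu, sub_self])
    ⟨v, hv⟩
  obtain ⟨β, hβ, hdβ⟩ := hbi.2.2.1 p q' i (z + u)
    ⟨add_mem hz.1 (hF.1 _ hp hu.1), add_mem hz.2 hu.2⟩ (by rw [map_add, hdz, hdu, add_zero])
    ⟨w - v, by rw [map_sub, hw, hv]; abel⟩
  exact ⟨α, hα, β, hβ, by rw [hdα, hdβ]; abel⟩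

theorem exists_cycle_sub_mem_sup (hbi : BiStrict Kc d F G)
    (hdd : ∀ i (x : Kc i), d (i + 1) (d i x) = 0)
    (hF : IsFiltrationBySubcomplexes Kc d F) (hG : IsFiltrationBySubcomplexes Kc d G)
    (hp : p' ≤ p) (hq : q' ≤ q) {x : Kc (i + 1)} (hx : x ∈ F p (i + 1) ⊓ G q (i + 1))
    (hdx : d (i + 1) x ∈ (F p' (i + 1 + 1) ⊓ G q (i + 1 + 1)) ⊔
      (F p (i + 1 + 1) ⊓ G q' (i + 1 + 1))) :
    ∃ x', x' ∈ F p (i + 1) ⊓ G q (i + 1) ∧ d (i + 1) x' = 0 ∧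
      x - x' ∈ (F p' (i + 1) ⊓ G q (i + 1)) ⊔ (F p (i + 1) ⊓ G q' (i + 1)) ⊔
        map (d i) (F p i ⊓ G q i) := by
  obtain ⟨a, ha, b, hb, hab⟩ := mem_sup.1 hdx
  obtain ⟨y, z, ⟨hy, hdy⟩, ⟨hz, hdz⟩, hyz⟩ :=
    hbi.exists_cycles_add_eq hdd hF hG hp hq ha hb (by rw [hab]; exact hdd _ x)
  obtain ⟨α, hα, β, hβ, hαβ⟩ :=
    hbi.exists_boundaries_add_eq hF hG hp hq hy hdy hz hdz ⟨x, by rw [hyz, hab]⟩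
  refine ⟨x - (α + β), sub_mem hx (add_mem (inf_le_inf (hF.1 _ hp) le_rfl hα)
    (inf_le_inf le_rfl (hG.1 _ hq) hβ)), by rw [map_sub, map_add, hαβ, hyz, hab, sub_self], ?_⟩
  rw [sub_sub_cancel]
  exact add_mem (mem_sup_left (mem_sup_left hα)) (mem_sup_left (mem_sup_right hβ))

theorem mem_sup_sup_map_iff_exists_cycles (hbi : BiStrict Kc d F G)
    (hdd : ∀ i (x : Kc i), d (i + 1) (d i x) = 0)
    (hF : IsFiltrationBySubcomplexes Kc d F) (hG : IsFiltrationBySubcomplexes Kc d G)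
    (hp : p' ≤ p) (hq : q' ≤ q) {x : Kc (i + 1)} (hdx : d (i + 1) x = 0) :
    x ∈ (F p' (i + 1) ⊓ G q (i + 1)) ⊔ (F p (i + 1) ⊓ G q' (i + 1)) ⊔
        map (d i) (F p i ⊓ G q i) ↔
      ∃ y z : Kc (i + 1),
        (y ∈ F p' (i + 1) ⊓ G q (i + 1) ∧ d (i + 1) y = 0) ∧
        (z ∈ F p (i + 1) ⊓ G q' (i + 1) ∧ d (i + 1) z = 0) ∧
        x - (y + z) ∈ map (d i) (F p i ⊓ G q i) := by
  constructor
  · intro hmem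
    obtain ⟨s, hs, _, ⟨w, hw, rfl⟩, rfl⟩ := mem_sup.1 hmem
    obtain ⟨a, ha, b, hb, rfl⟩ := mem_sup.1 hs
    have hab : d (i + 1) (a + b) = 0 := by rwa [map_add _ (a + b), hdd, add_zero] at hdx
    obtain ⟨y, z, hy, hz, hyz⟩ := hbi.exists_cycles_add_eq hdd hF hG hp hq ha hb hab
    exact ⟨y, z, hy, hz, w, hw, by rw [hyz]; abel⟩
  · rintro ⟨y, z, ⟨hy, -⟩, ⟨hz, -⟩, hw⟩
    rw [← add_sub_cancel (y + z) x]
    exact add_mem (add_mem (mem_sup_left (mem_sup_left hy)) (mem_sup_left (mem_sup_right hz)))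
      (mem_sup_right hw)

end BiStrict

/-- If `(K; F, G)` is bi-strict, then for all `i, p, q` the natural
map `H^i(F_p K ∩ G_q K) → H^i((F_p K ∩ G_q K)/(F_{p-1} K ∩ G_q K + F_p K ∩ G_{q-1} K))`
is surjective (first conjunct: every cycle of the quotient complex is, modulo the
subobject `F_{p-1} K ∩ G_q K + F_p K ∩ G_{q-1} K` and boundaries `d (F_p K ∩ G_q K)`,
represented by a cycle of `F_p K ∩ G_q K`), and its kernel equals the sum of the
images of `H^i(F_{p-1} K ∩ G_q K)` and `H^i(F_p K ∩ G_{q-1} K)` (second conjunct);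
i.e. `Gr^F_p Gr^G_q H^i(K) ≅ H^i(Gr^F_p Gr^G_q K)`. -/
theorem biStrict_homology_gr_comm
    (F G : ℤ → ∀ i, Submodule R (Kc i))
    (hdd : ∀ i (x : Kc i), d (i + 1) (d i x) = 0)
    (hF : IsFiltrationBySubcomplexes Kc d F)
    (hG : IsFiltrationBySubcomplexes Kc d G)
    (hbi : BiStrict Kc d F G) :
    -- surjectivity of `H^i(F_p ∩ G_q) → H^i(Gr^F_p Gr^G_q K)`
    (∀ p q i (x : Kc (i + 1)), x ∈ F p (i + 1) ⊓ G q (i + 1) →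
      d (i + 1) x ∈ (F (p - 1) (i + 1 + 1) ⊓ G q (i + 1 + 1)) ⊔
        (F p (i + 1 + 1) ⊓ G (q - 1) (i + 1 + 1)) →
      ∃ x', x' ∈ F p (i + 1) ⊓ G q (i + 1) ∧ d (i + 1) x' = 0 ∧
        x - x' ∈ (F (p - 1) (i + 1) ⊓ G q (i + 1)) ⊔
          (F p (i + 1) ⊓ G (q - 1) (i + 1)) ⊔
          Submodule.map (d i) (F p i ⊓ G q i)) ∧
    -- the kernel is the sum of the images of `H^i(F_{p-1} ∩ G_q)` and `H^i(F_p ∩ G_{q-1})`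
    (∀ p q i (x : Kc (i + 1)), x ∈ F p (i + 1) ⊓ G q (i + 1) → d (i + 1) x = 0 →
      (x ∈ (F (p - 1) (i + 1) ⊓ G q (i + 1)) ⊔ (F p (i + 1) ⊓ G (q - 1) (i + 1)) ⊔
          Submodule.map (d i) (F p i ⊓ G q i) ↔
        ∃ y z : Kc (i + 1),
          (y ∈ F (p - 1) (i + 1) ⊓ G q (i + 1) ∧ d (i + 1) y = 0) ∧
          (z ∈ F p (i + 1) ⊓ G (q - 1) (i + 1) ∧ d (i + 1) z = 0) ∧
          x - (y + z) ∈ Submodule.map (d i) (F p i ⊓ G q i))) := by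
  have hle (n : ℤ) : n - 1 ≤ n := sub_le_self n zero_le_one
  exact ⟨fun p q _ _ hx hdx => hbi.exists_cycle_sub_mem_sup hdd hF hG (hle p) (hle q) hx hdx,
    fun p q _ _ _ hdx => hbi.mem_sup_sup_map_iff_exists_cycles hdd hF hG (hle p) (hle q) hdx⟩
end
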